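/- Fix n ≥ 1 and set b = ⌊log₂ n⌋ + 2. In ℤ[X₀, …, X_{b−1}], let I be the ideal generated by Xᵢ² − (2·Xᵢ + X_{i+1}) for 0 ≤ i ≤ b−2 together with X_{b−1}². If g is a multilinear polynomial with (2 + X₀)ⁿ − g ∈ I, then evaluating g at X₀ = X₁ = ⋯ = X_{b−1} = 1 gives ∑_{k=0}^{n} C(n,k)·C(2k,k), the first binomial transform of the central binomial coefficients (OEIS A026375). -/

import Mathlib

/-!
Send `Xᵢ` to `1 + t^(2^i) + t^(-2^i)` in `ℤ[t] / ((t^(2m) + t^m + 1)²)`, `m = 2^(b-1)`, where `t` is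
a unit. Since `(1 + u + u⁻¹)² = 2 (1 + u + u⁻¹) + (1 + u² + u⁻²)` and
`(1 + t^m + t^(-m))² = t^(-2m) (t^(2m) + t^m + 1)² = 0`, this substitution kills `I`.
Follow it by the functional reading off the coefficient of `t⁰` in the basis
`t^(-(2m-1)), …, t^(2m)`. A multilinear monomial `∏_{i ∈ S} Xᵢ` goes to the constant term of
`∏_{i ∈ S} (t^(2^i) + 1 + t^(-2^i))`, which is `1` because binary expansions are unique, so a
multilinear `g` goes to `g(1, …, 1)`. And `(2 + X₀)ⁿ` goes to the constant term of
`(t + 3 + t⁻¹)ⁿ`, the coefficient of `tⁿ` in `((1 + t)² + t)ⁿ`, that is `∑ C(n,k) C(2k,k)`.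
-/
open MvPolynomial

/-- The generators of the ideal `I`: `Xᵢ² − (2Xᵢ + X_{i+1})` for `i ≤ b-2`, and `X_{b-1}²`. -/
noncomputable def gens (b : ℕ) : Fin b → MvPolynomial (Fin b) ℤ := fun i =>
  if h : (i : ℕ) + 1 < b then X i ^ 2 - (2 * X i + X ⟨(i : ℕ) + 1, h⟩) else X i ^ 2

namespace Polynomial

noncomputable def trinomialOnes (R : Type*) [Semiring R] (a : ℕ) : R[X] := X ^ (2 * a) + X ^ a + 1

variable {R : Type*} [CommSemiring R]

lemma natDegree_trinomialOnes_le (a : ℕ) : (trinomialOnes R a).natDegree ≤ 2 * a := by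
  unfold trinomialOnes; compute_degree; omega

lemma natDegree_prod_trinomialOnes_le {ι : Type*} (s : Finset ι) (e : ι → ℕ) :
    (∏ i ∈ s, trinomialOnes R (e i)).natDegree ≤ 2 * ∑ i ∈ s, e i := by
  rw [Finset.mul_sum]
  exact (natDegree_prod_le _ _).trans (Finset.sum_le_sum fun i _ ↦ natDegree_trinomialOnes_le (e i))

lemma monic_trinomialOnes {a : ℕ} (ha : 0 < a) : (trinomialOnes R a).Monic := by
  nontriviality R
  rw [trinomialOnes, add_assoc, ← C_1]
  exact monic_X_pow_add <| by rw [degree_X_pow_add_C ha]; exact_mod_cast (by omega : a < 2 * a)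

lemma natDegree_trinomialOnes [Nontrivial R] {a : ℕ} (ha : 0 < a) :
    (trinomialOnes R a).natDegree = 2 * a := by
  rw [trinomialOnes, add_assoc, ← C_1, natDegree_add_eq_left_of_degree_lt, natDegree_X_pow]
  rw [degree_X_pow_add_C ha, degree_X_pow]; exact_mod_cast (by omega : a < 2 * a)

lemma coeff_zero_trinomialOnes {a : ℕ} (ha : 0 < a) : (trinomialOnes R a).coeff 0 = 1 := by
  simp [trinomialOnes, coeff_X_pow, ha.ne', ha.ne]

lemma coeff_prod_trinomialOnes_two_pow (s : Finset ℕ) :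
    (∏ i ∈ s, trinomialOnes R (2 ^ i)).coeff (∑ i ∈ s, 2 ^ i) = 1 := by
  induction s using Finset.induction_on_max with
  | empty => simp
  | insert a s ha ih =>
    have has : a ∉ s := fun h ↦ lt_irrefl a (ha a h)
    have hlt : ∑ i ∈ s, 2 ^ i < 2 ^ a := Nat.geomSum_lt le_rfl ha
    have hdeg := natDegree_prod_trinomialOnes_le (R := R) s (2 ^ ·)
    rw [Finset.prod_insert has, Finset.sum_insert has, mul_comm, trinomialOnes, mul_add, mul_add,
      mul_one, coeff_add, coeff_add, coeff_mul_X_pow', coeff_mul_X_pow', if_neg (by omega),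
      if_pos (by omega), Nat.add_sub_cancel_left, ih, coeff_eq_zero_of_natDegree_lt (by omega)]
    simp

lemma coeff_X_sq_add_three_mul_X_add_one_pow_self (n : ℕ) :
    ((X ^ 2 + 3 * X + 1 : R[X]) ^ n).coeff n =
      ∑ k ∈ Finset.range (n + 1), (n.choose k : R) * ((2 * k).choose k : R) := by
  rw [show (X ^ 2 + 3 * X + 1 : R[X]) = (1 + X) ^ 2 + X by ring, add_pow, finsetSum_coeff]
  refine Finset.sum_congr rfl fun k hk ↦ ?_
  have hkn : k ≤ n := Nat.lt_succ_iff.mp (Finset.mem_range.mp hk)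
  rw [← pow_mul, ← C_eq_natCast, mul_comm, coeff_C_mul, coeff_mul_X_pow',
    if_pos (Nat.sub_le n k), Nat.sub_sub_self hkn, coeff_one_add_X_pow]

end Polynomial

namespace AdjoinRoot

open _root_.Polynomial

variable {R : Type*} [CommRing R] {f : R[X]}

lemma root_mul_neg_mk_divX (hf : f.coeff 0 = 1) : root f * -mk f (divX f) = 1 := by
  have h := congrArg (mk f) (X_mul_divX_add f)
  rw [mk_self, map_add, map_mul, mk_X, mk_C, hf, map_one] at h
  linear_combination -h

/-- The coefficient of `root f ^ 0` when elements are written in the basis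
`root f ^ (-k), …, root f ^ (natDegree f - 1 - k)`. -/
noncomputable def shiftedCoeff (hf : f.Monic) (k : ℕ) : AdjoinRoot f →ₗ[R] R :=
  lcoeff R k ∘ₗ modByMonicHom hf ∘ₗ LinearMap.mulLeft R (root f ^ k)

lemma shiftedCoeff_mul_mk [Nontrivial R] (hf : f.Monic) {v : AdjoinRoot f} (hv : root f * v = 1)
    {k c : ℕ} {p : R[X]} (hc : c ≤ k) (hp : p.natDegree + (k - c) < f.natDegree) :
    shiftedCoeff hf k (v ^ c * mk f p) = p.coeff c := by
  have hmul : root f ^ k * (v ^ c * mk f p) = mk f (Polynomial.X ^ (k - c) * p) := by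
    have hrv : root f ^ c * v ^ c = 1 := by rw [← mul_pow, hv, one_pow]
    rw [map_mul, map_pow, mk_X, ← Nat.sub_add_cancel hc, pow_add, Nat.add_sub_cancel]
    linear_combination (root f ^ (k - c) * mk f p) * hrv
  have hdeg : (Polynomial.X ^ (k - c) * p).degree < f.degree :=
    degree_lt_degree <| natDegree_mul_le.trans_lt <| by
      have := natDegree_X_pow_le (R := R) (k - c); omega
  rw [shiftedCoeff, LinearMap.comp_apply, LinearMap.comp_apply, LinearMap.mulLeft_apply, hmul,
    modByMonicHom_mk, (modByMonic_eq_self_iff hf).mpr hdeg, Polynomial.lcoeff_apply,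
    coeff_X_pow_mul', if_pos (Nat.sub_le k c), Nat.sub_sub_self hc]

end AdjoinRoot

section UnitPair

variable {A : Type*} [CommRing A] {t v : A}

lemma sq_one_add_pow_add_pow (htv : t * v = 1) (a : ℕ) :
    (1 + t ^ a + v ^ a) ^ 2 = 2 * (1 + t ^ a + v ^ a) + (1 + t ^ (a * 2) + v ^ (a * 2)) := by
  have h : t ^ a * v ^ a = 1 := by rw [← mul_pow, htv, one_pow]
  rw [pow_mul, pow_mul]
  linear_combination 2 * h

lemma one_add_pow_add_pow_eq_mul (htv : t * v = 1) (a : ℕ) :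
    1 + t ^ a + v ^ a = v ^ a * (t ^ (2 * a) + t ^ a + 1) := by
  have h : t ^ a * v ^ a = 1 := by rw [← mul_pow, htv, one_pow]
  rw [mul_comm 2 a, pow_mul]
  linear_combination (-1 - t ^ a) * h

lemma two_add_one_add_add_eq_mul (htv : t * v = 1) : 2 + (1 + t + v) = v * (t ^ 2 + 3 * t + 1) := by
  linear_combination (-3 - t) * htv

end UnitPair

namespace gens

variable (c : ℕ)

section Polynomial

open Polynomial AdjoinRoot

noncomputable abbrev modulus : ℤ[X] := trinomialOnes ℤ (2 ^ c) ^ 2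

lemma monic_modulus : (modulus c).Monic := (monic_trinomialOnes (Nat.two_pow_pos c)).pow 2

lemma natDegree_modulus : (modulus c).natDegree = 4 * 2 ^ c := by
  rw [(monic_trinomialOnes (Nat.two_pow_pos c)).natDegree_pow,
    natDegree_trinomialOnes (Nat.two_pow_pos c)]
  ring

lemma coeff_zero_modulus : (modulus c).coeff 0 = 1 := by
  rw [Polynomial.coeff_zero_eq_eval_zero, Polynomial.eval_pow,
    ← Polynomial.coeff_zero_eq_eval_zero, coeff_zero_trinomialOnes (Nat.two_pow_pos c), one_pow]

noncomputable def rootInv : AdjoinRoot (modulus c) := -mk (modulus c) (divX (modulus c))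

lemma root_mul_rootInv : root (modulus c) * rootInv c = 1 :=
  root_mul_neg_mk_divX (coeff_zero_modulus c)

noncomputable def middleCoeff : AdjoinRoot (modulus c) →ₗ[ℤ] ℤ :=
  shiftedCoeff (monic_modulus c) (2 * 2 ^ c - 1)

lemma mk_trinomialOnes (a : ℕ) :
    mk (modulus c) (trinomialOnes ℤ a) = root (modulus c) ^ (2 * a) + root (modulus c) ^ a + 1 := by
  simp [trinomialOnes]

lemma middleCoeff_prod (s : Finset ℕ) (hs : ∀ i ∈ s, i < c + 1) :
    middleCoeff c (∏ i ∈ s, (1 + root (modulus c) ^ 2 ^ i + rootInv c ^ 2 ^ i)) = 1 := by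
  have hsum : ∑ i ∈ s, 2 ^ i < 2 * 2 ^ c := by rw [← pow_succ']; exact Nat.geomSum_lt le_rfl hs
  have hdeg := natDegree_prod_trinomialOnes_le (R := ℤ) s (2 ^ ·)
  have hprod : ∏ i ∈ s, (1 + root (modulus c) ^ 2 ^ i + rootInv c ^ 2 ^ i) =
      rootInv c ^ (∑ i ∈ s, 2 ^ i) * mk (modulus c) (∏ i ∈ s, trinomialOnes ℤ (2 ^ i)) := by
    simp only [one_add_pow_add_pow_eq_mul (root_mul_rootInv c), map_prod, mk_trinomialOnes,
      Finset.prod_mul_distrib, Finset.prod_pow_eq_pow_sum]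
  rw [hprod, middleCoeff, shiftedCoeff_mul_mk _ (root_mul_rootInv c) (by omega)
    (by rw [natDegree_modulus]; omega), coeff_prod_trinomialOnes_two_pow]

end Polynomial

section MvPolynomial

open scoped Polynomial
open AdjoinRoot

noncomputable def toAdjoinRoot : MvPolynomial (Fin (c + 1)) ℤ →ₐ[ℤ] AdjoinRoot (modulus c) :=
  aeval fun i ↦ 1 + root (modulus c) ^ 2 ^ (i : ℕ) + rootInv c ^ 2 ^ (i : ℕ)

lemma toAdjoinRoot_gens (i : Fin (c + 1)) : toAdjoinRoot c (gens (c + 1) i) = 0 := by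
  have htv := root_mul_rootInv c
  unfold gens
  split_ifs with hi
  · simp only [toAdjoinRoot, map_sub, map_add, map_mul, map_pow, MvPolynomial.aeval_X, map_ofNat]
    rw [pow_succ 2 (i : ℕ), sq_one_add_pow_add_pow htv, sub_self]
  · have hic : (i : ℕ) = c := by omega
    simp only [toAdjoinRoot, map_pow, MvPolynomial.aeval_X, hic, one_add_pow_add_pow_eq_mul htv,
      mul_pow]
    rw [← mk_trinomialOnes, ← map_pow, mk_self, mul_zero]

lemma span_gens_le_ker_toAdjoinRoot :
    Ideal.span (Set.range (gens (c + 1))) ≤ RingHom.ker (toAdjoinRoot c) :=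
  Ideal.span_le.mpr <| Set.range_subset_iff.mpr (toAdjoinRoot_gens c)

lemma toAdjoinRoot_monomial_of_le_one (d : Fin (c + 1) →₀ ℕ) (hd : ∀ i, d i ≤ 1) :
    toAdjoinRoot c (monomial d 1) = ∏ i ∈ d.support.map Fin.valEmbedding,
      (1 + root (modulus c) ^ 2 ^ i + rootInv c ^ 2 ^ i) := by
  rw [toAdjoinRoot, aeval_monomial, map_one, one_mul, Finset.prod_map, Finsupp.prod]
  refine Finset.prod_congr rfl fun i hi ↦ ?_
  rw [(hd i).antisymm (Nat.one_le_iff_ne_zero.mpr (Finsupp.mem_support_iff.mp hi)), pow_one]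
  rfl

lemma middleCoeff_toAdjoinRoot_eq_eval (g : MvPolynomial (Fin (c + 1)) ℤ)
    (hg : ∀ d ∈ g.support, ∀ i, d i ≤ 1) :
    middleCoeff c (toAdjoinRoot c g) = eval (fun _ ↦ 1) g := by
  rw [g.as_sum, map_sum, map_sum, map_sum]
  refine Finset.sum_congr rfl fun d hd ↦ ?_
  have hvals : ∀ i ∈ d.support.map Fin.valEmbedding, i < c + 1 := by
    simp only [Finset.mem_map, Fin.valEmbedding_apply]
    rintro _ ⟨i, -, rfl⟩
    exact i.isLt
  rw [← mul_one (coeff d g), ← smul_eq_mul, ← smul_monomial, map_smul, map_smul,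
    toAdjoinRoot_monomial_of_le_one c d (hg d hd), middleCoeff_prod c _ hvals]
  simp [eval_monomial]

lemma middleCoeff_toAdjoinRoot_two_add_X_zero_pow {n : ℕ} (hn : n < 2 ^ (c + 1)) :
    middleCoeff c (toAdjoinRoot c ((2 + X 0) ^ n)) =
      ∑ k ∈ Finset.range (n + 1), (n.choose k : ℤ) * ((2 * k).choose k : ℤ) := by
  have hx : toAdjoinRoot c ((2 + X 0) ^ n) = rootInv c ^ n *
      mk (modulus c) ((Polynomial.X ^ 2 + 3 * Polynomial.X + 1) ^ n) := by
    simp [toAdjoinRoot, two_add_one_add_add_eq_mul (root_mul_rootInv c), mul_pow, map_ofNat]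
  have hdeg : ((Polynomial.X ^ 2 + 3 * Polynomial.X + 1 : ℤ[X]) ^ n).natDegree ≤ n * 2 :=
    Polynomial.natDegree_pow_le_of_le n (by compute_degree!)
  rw [pow_succ'] at hn
  rw [hx, middleCoeff, shiftedCoeff_mul_mk _ (root_mul_rootInv c) (by omega)
    (by rw [natDegree_modulus]; omega), Polynomial.coeff_X_sq_add_three_mul_X_add_one_pow_self]

end MvPolynomial

end gens

open gens in
theorem stmt8 (n : ℕ) (b : ℕ) (hb : b = Nat.log 2 n + 2)
    (g : MvPolynomial (Fin b) ℤ)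
    (hml : ∀ m ∈ g.support, ∀ i : Fin b, m i ≤ 1)
    (hg : (2 + X (⟨0, by omega⟩ : Fin b)) ^ n - g ∈ Ideal.span (Set.range (gens b))) :
    eval (fun _ : Fin b => (1 : ℤ)) g
      = ∑ k ∈ Finset.range (n + 1), (n.choose k : ℤ) * ((2 * k).choose k : ℤ) := by
  subst hb
  have hn : n < 2 ^ (Nat.log 2 n + 2) :=
    (Nat.lt_pow_succ_log_self one_lt_two n).trans (Nat.pow_lt_pow_succ one_lt_two)
  have hψ : toAdjoinRoot _ ((2 + X 0) ^ n) = toAdjoinRoot _ g := by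
    rw [← sub_eq_zero, ← map_sub]
    exact RingHom.mem_ker.mp (span_gens_le_ker_toAdjoinRoot _ hg)
  rw [← middleCoeff_toAdjoinRoot_eq_eval _ g hml, ← hψ]
  exact middleCoeff_toAdjoinRoot_two_add_X_zero_pow _ hn
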